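/- arXiv:1307.3214 — 2 statements merged into one kernel-verified Lean document; each statement's English description precedes it below -/
import Mathlib

section
/- Let (Ω, F, P) be a probability space and (Λ_n)_{n≥1} an i.i.d. sequence of nonnegative real random variables whose common law has Lebesgue density p, and assume P(Λ_1 > A) > 0 for a fixed A > 0. For x ≥ 0 define R_0^x = x, R_{n+1}^x = (1 + R_n^x)·Λ_{n+1}, S_A^x = inf{n ≥ 1 : R_n^x ≥ A}, ℓ(x) = E[S_A^x], and μ_2(x) = E[(S_A^x)²]. Let K(x,y) = p(y/(1+x))/(1+x). Then μ_2(x) is finite for all x ∈ [0,A] and satisfies μ_2(x) = 2·ℓ(x) − 1 + ∫_0^A K(x,y)·μ_2(y) dy. -/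
open MeasureTheory ProbabilityTheory
open scoped ENNReal NNReal

/-!
Everything reduces to the common law `ν` of the `Λ n`. The event `{S_A^y > k}` only involves
`Λ 1, …, Λ k`, so `P (S_A^y > k) = q_k y` is the `ν^⊗k`-mass of the set of first `k` observations
keeping the chain below `A`, and `ℓ = ∑ q_k`, `μ₂ = ∑ (2k + 1) q_k`. Conditioning on the first
observation gives `q_{k+1} y = ∫_{(1+y)u < A} q_k ((1+y)u) dν(u)`; as `2(k+1) + 1 = 2 + (2k+1)`,
summing yields `μ₂ x + 1 = 2 ℓ x + ∫_{(1+x)u < A} μ₂ ((1+x)u) dν(u)`, and the substitution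
`y = (1+x)u` turns the last integral into `∫_0^A K x y μ₂ y dy`. Finiteness comes from
`q_k y ≤ ν(Iio A)^k` for `y ≥ 0`: the nonnegative chain cannot survive a step with `Λ ≥ A`.
-/

-- `v n` stands for the observation `Λ (n + 1)`.
def gsrPath (y : ℝ) (v : ℕ → ℝ) : ℕ → ℝ
  | 0 => y
  | n + 1 => (1 + gsrPath y v n) * v n

lemma gsrPath_succ' (y : ℝ) (v : ℕ → ℝ) (m : ℕ) :
    gsrPath y v (m + 1) = gsrPath ((1 + y) * v 0) (fun j => v (j + 1)) m := by
  induction m with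
  | zero => rfl
  | succ n ih => simp only [gsrPath] at ih ⊢; rw [ih]

noncomputable def gsrStoppingTime (A y : ℝ) (v : ℕ → ℝ) : ℕ∞ :=
  sInf {n : ℕ∞ | ∃ m : ℕ, n = m ∧ 1 ≤ m ∧ A ≤ gsrPath y v m}

lemma natCast_lt_gsrStoppingTime_iff (A y : ℝ) (v : ℕ → ℝ) (k : ℕ) :
    (k : ℕ∞) < gsrStoppingTime A y v ↔ ∀ m < k, gsrPath y v (m + 1) < A := by
  rw [gsrStoppingTime, ← ENat.add_one_le_iff (ENat.natCast_ne_top k), le_sInf_iff]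
  constructor
  · intro h m hm
    by_contra! hA
    have := h _ ⟨m + 1, rfl, by omega, hA⟩
    norm_cast at this
    omega
  · rintro h _ ⟨m, rfl, hm, hA⟩
    by_contra! hlt
    norm_cast at hlt
    exact (h (m - 1) (by omega)).not_ge (by rwa [Nat.sub_add_cancel hm])

def survivalSet (A : ℝ) : (k : ℕ) → ℝ → Set (Fin k → ℝ)
  | 0, _ => Set.univ
  | k + 1, y => {w | (1 + y) * w 0 < A ∧ Fin.tail w ∈ survivalSet A k ((1 + y) * w 0)}

lemma mem_survivalSet_iff (A : ℝ) (k : ℕ) (y : ℝ) (v : ℕ → ℝ) :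
    (fun i : Fin k => v i) ∈ survivalSet A k y ↔ ∀ m < k, gsrPath y v (m + 1) < A := by
  induction k generalizing y v with
  | zero => simp [survivalSet]
  | succ k ih =>
    change (1 + y) * v 0 < A ∧ (fun i : Fin k => v (i + 1)) ∈ survivalSet A k ((1 + y) * v 0) ↔ _
    rw [ih _ (fun j => v (j + 1)), Nat.forall_lt_succ_left]
    simp only [gsrPath_succ']
    rfl

lemma measurableSet_survivalSet_prod (A : ℝ) (k : ℕ) :
    MeasurableSet {q : ℝ × (Fin k → ℝ) | q.2 ∈ survivalSet A k q.1} := by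
  induction k with
  | zero => simp [survivalSet]
  | succ k ih =>
    have hstep : Measurable fun q : ℝ × (Fin (k + 1) → ℝ) => ((1 + q.1) * q.2 0, Fin.tail q.2) := by
      fun_prop
    exact (measurableSet_lt hstep.fst measurable_const).inter (hstep ih)

lemma measurableSet_survivalSet (A : ℝ) (k : ℕ) (y : ℝ) : MeasurableSet (survivalSet A k y) :=
  measurable_prodMk_left (measurableSet_survivalSet_prod A k)

lemma sum_range_two_mul_add_one {R : Type*} [CommSemiring R] (n : ℕ) :
    ∑ k ∈ Finset.range n, (2 * (k : R) + 1) = (n : R) ^ 2 := by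
  induction n with
  | zero => simp
  | succ n ih => rw [Finset.sum_range_succ, ih]; push_cast; ring

lemma ENat.tsum_ite_natCast_lt_coe (w : ℕ → ℝ≥0∞) (n : ℕ) :
    ∑' k : ℕ, (if (k : ℕ∞) < n then w k else 0) = ∑ k ∈ Finset.range n, w k := by
  rw [tsum_eq_sum (s := Finset.range n) fun k hk => if_neg (by simpa using hk)]
  exact Finset.sum_congr rfl fun k hk => if_pos (by simpa using hk)

lemma ENat.toENNReal_eq_tsum (a : ℕ∞) :
    (a : ℝ≥0∞) = ∑' k : ℕ, if (k : ℕ∞) < a then 1 else 0 := by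
  cases a with
  | top => simp
  | coe n => rw [ENat.tsum_ite_natCast_lt_coe]; simp

lemma ENat.toENNReal_sq_eq_tsum (a : ℕ∞) :
    (a : ℝ≥0∞) ^ 2 = ∑' k : ℕ, if (k : ℕ∞) < a then 2 * (k : ℝ≥0∞) + 1 else 0 := by
  cases a with
  | top =>
    refine (top_unique ?_).symm
    calc (⊤ : ℝ≥0∞) = ∑' _ : ℕ, 1 := (ENNReal.tsum_const_eq_top_of_ne_zero one_ne_zero).symm
      _ ≤ _ := ENNReal.tsum_le_tsum fun k => by simp
  | coe n => rw [ENat.tsum_ite_natCast_lt_coe, sum_range_two_mul_add_one]; simp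

lemma lintegral_tsum_ite_natCast_lt {Ω : Type*} [MeasurableSpace Ω] (P : Measure Ω)
    (w : ℕ → ℝ≥0∞) {f : Ω → ℕ∞} (hf : ∀ k : ℕ, MeasurableSet {ω | (k : ℕ∞) < f ω}) :
    ∫⁻ ω, ∑' k : ℕ, (if (k : ℕ∞) < f ω then w k else 0) ∂P =
      ∑' k : ℕ, w k * P {ω | (k : ℕ∞) < f ω} := by
  have hind : ∀ k : ℕ, (fun ω => if (k : ℕ∞) < f ω then w k else 0) =
      {ω | (k : ℕ∞) < f ω}.indicator fun _ => w k := fun k => by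
    ext ω; simp [Set.indicator_apply]
  rw [lintegral_tsum fun k => by rw [hind]; exact (measurable_const.indicator (hf k)).aemeasurable]
  exact tsum_congr fun k => by rw [hind, lintegral_indicator_const (hf k)]

lemma tsum_two_mul_add_one_mul_pow_lt_top {ρ : ℝ≥0∞} (hρ : ρ < 1) :
    ∑' k : ℕ, (2 * (k : ℝ≥0∞) + 1) * ρ ^ k < ⊤ := by
  lift ρ to ℝ≥0 using hρ.ne_top
  have hρ' : ‖(ρ : ℝ)‖ < 1 := by simpa using hρ
  have hs : Summable fun k : ℕ => (2 * (k : ℝ≥0) + 1) * ρ ^ k := by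
    rw [← NNReal.summable_coe]
    refine (((summable_pow_mul_geometric_of_norm_lt_one 1 hρ').mul_left 2).add
      (summable_pow_mul_geometric_of_norm_lt_one 0 hρ')).congr fun k => ?_
    push_cast; ring
  have := ENNReal.coe_tsum hs
  push_cast at this
  rw [← this]
  exact ENNReal.coe_lt_top

section survival

variable (ν : Measure ℝ) [IsProbabilityMeasure ν] (A : ℝ)

-- The transition operator of the GSR chain killed on reaching `A`; when `ν` has density `p`
-- it is `f ↦ ∫_0^A K x y f y dy`.
noncomputable def gsrTransition (f : ℝ → ℝ≥0∞) (x : ℝ) : ℝ≥0∞ :=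
  ∫⁻ u, {u | (1 + x) * u < A}.indicator (fun u => f ((1 + x) * u)) u ∂ν

noncomputable def survivalProb (k : ℕ) (y : ℝ) : ℝ≥0∞ :=
  Measure.pi (fun _ : Fin k => ν) (survivalSet A k y)

lemma survivalProb_zero (y : ℝ) : survivalProb ν A 0 y = 1 := by
  simp [survivalProb, survivalSet]

lemma survivalProb_succ (k : ℕ) (y : ℝ) :
    survivalProb ν A (k + 1) y = gsrTransition ν A (survivalProb ν A k) y := by
  let e := MeasurableEquiv.piFinSuccAbove (fun _ : Fin (k + 1) => ℝ) 0
  let G : Set (ℝ × (Fin k → ℝ)) :=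
    {q | (1 + y) * q.1 < A ∧ q.2 ∈ survivalSet A k ((1 + y) * q.1)}
  have hstep : Measurable fun q : ℝ × (Fin k → ℝ) => ((1 + y) * q.1, q.2) := by fun_prop
  have hG : MeasurableSet G := (measurableSet_lt hstep.fst measurable_const).inter
    ((measurableSet_survivalSet_prod A k).preimage hstep)
  -- `e` splits `w` into `(w 0, Fin.tail w)`, which is how `survivalSet` recurses.
  have hpre : survivalSet A (k + 1) y = e ⁻¹' G := rfl
  rw [survivalProb, hpre, gsrTransition,
    (measurePreserving_piFinSuccAbove (fun _ => ν) 0).measure_preimage hG.nullMeasurableSet,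
    Measure.prod_apply hG]
  refine lintegral_congr fun u => ?_
  by_cases hu : (1 + y) * u < A
  · simp [G, hu, survivalProb]
  · simp [G, hu]

lemma measurable_survivalProb (k : ℕ) : Measurable (survivalProb ν A k) :=
  measurable_measure_prodMk_left (measurableSet_survivalSet_prod A k)

lemma survivalProb_le_pow (hν : ν (Set.Iio 0) = 0) (k : ℕ) {y : ℝ} (hy : 0 ≤ y) :
    survivalProb ν A k y ≤ ν (Set.Iio A) ^ k := by
  induction k generalizing y with
  | zero => rw [survivalProb_zero, pow_zero]
  | succ k ih =>
    have hpos : ∀ᵐ u ∂ν, 0 ≤ u := by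
      filter_upwards [measure_eq_zero_iff_ae_notMem.1 hν] with u hu using not_lt.1 hu
    calc survivalProb ν A (k + 1) y
        ≤ ∫⁻ u, (Set.Iio A).indicator (fun _ => ν (Set.Iio A) ^ k) u ∂ν := by
          rw [survivalProb_succ, gsrTransition]
          refine lintegral_mono_ae (hpos.mono fun u hu => ?_)
          by_cases hu' : (1 + y) * u < A
          · have huA : u < A := by nlinarith
            rw [Set.indicator_of_mem (show u ∈ {u | (1 + y) * u < A} from hu'),
              Set.indicator_of_mem (show u ∈ Set.Iio A from huA)]
            exact ih (by positivity)
          · simp [Set.indicator, hu']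
      _ = ν (Set.Iio A) ^ (k + 1) := by
          rw [lintegral_indicator_const measurableSet_Iio, pow_succ]

noncomputable def arl (y : ℝ) : ℝ≥0∞ :=
  ∑' k : ℕ, survivalProb ν A k y

noncomputable def arlSecondMoment (y : ℝ) : ℝ≥0∞ :=
  ∑' k : ℕ, (2 * (k : ℝ≥0∞) + 1) * survivalProb ν A k y

lemma measurable_arlSecondMoment : Measurable (arlSecondMoment ν A) :=
  Measurable.tsum fun k => measurable_const.mul (measurable_survivalProb ν A k)

lemma arlSecondMoment_lt_top (hν : ν (Set.Iio 0) = 0) (hνA : ν (Set.Iio A) < 1) {y : ℝ}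
    (hy : 0 ≤ y) : arlSecondMoment ν A y < ⊤ :=
  (ENNReal.tsum_le_tsum fun k => by gcongr; exact survivalProb_le_pow ν A hν k hy).trans_lt
    (tsum_two_mul_add_one_mul_pow_lt_top hνA)

lemma arlSecondMoment_add_one (x : ℝ) :
    arlSecondMoment ν A x + 1 = 2 * arl ν A x + gsrTransition ν A (arlSecondMoment ν A) x := by
  have hD : ∑' k : ℕ, (2 * (k : ℝ≥0∞) + 1) * survivalProb ν A (k + 1) x =
      gsrTransition ν A (arlSecondMoment ν A) x := by
    have hmeas : ∀ k, Measurable fun u : ℝ => survivalProb ν A k ((1 + x) * u) := fun k =>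
      (measurable_survivalProb ν A k).comp (measurable_const.mul measurable_id)
    have hset : MeasurableSet {u : ℝ | (1 + x) * u < A} :=
      measurableSet_lt (measurable_const.mul measurable_id) measurable_const
    simp only [survivalProb_succ, gsrTransition, arlSecondMoment,
      ← lintegral_const_mul _ ((hmeas _).indicator hset)]
    rw [← lintegral_tsum fun k => (((hmeas k).indicator hset).const_mul _).aemeasurable]
    refine lintegral_congr fun u => ?_
    by_cases hu : (1 + x) * u < A
    · simp [Set.indicator_of_mem (show u ∈ {u | (1 + x) * u < A} from hu)]
    · simp [Set.indicator_of_notMem (show u ∉ {u | (1 + x) * u < A} from hu)]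
  have hsplit : ∑' k : ℕ, (2 * ((k + 1 : ℕ) : ℝ≥0∞) + 1) * survivalProb ν A (k + 1) x =
      2 * ∑' k : ℕ, survivalProb ν A (k + 1) x +
        ∑' k : ℕ, (2 * (k : ℝ≥0∞) + 1) * survivalProb ν A (k + 1) x := by
    rw [← ENNReal.tsum_mul_left, ← ENNReal.tsum_add]
    exact tsum_congr fun k => by push_cast; ring
  rw [← hD, arlSecondMoment, tsum_eq_zero_add' ENNReal.summable, hsplit, arl,
    tsum_eq_zero_add' (f := fun k => survivalProb ν A k x) ENNReal.summable, survivalProb_zero]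
  push_cast
  ring

end survival

lemma lintegral_comp_mul_withDensity {p : ℝ → ℝ} (hp : Measurable p) {c : ℝ} (hc : 0 < c)
    {g : ℝ → ℝ≥0∞} (hg : Measurable g) :
    ∫⁻ u, g (c * u) ∂(volume.withDensity fun t => ENNReal.ofReal (p t)) =
      ∫⁻ y, ENNReal.ofReal (p (y / c) / c) * g y := by
  have hF : Measurable fun y => ENNReal.ofReal (p (y / c)) * g y :=
    (hp.comp (measurable_id.div_const c)).ennreal_ofReal.mul hg
  rw [lintegral_withDensity_eq_lintegral_mul _ hp.ennreal_ofReal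
    (by fun_prop : Measurable fun u => g (c * u))]
  have hcv := lintegral_map hF (measurable_const_mul c) (μ := volume)
  rw [Real.map_volume_mul_left hc.ne', lintegral_smul_measure] at hcv
  simp only [mul_div_cancel_left₀ _ hc.ne'] at hcv
  rw [Pi.mul_def, ← hcv, abs_of_pos (inv_pos.2 hc), smul_eq_mul, ← lintegral_const_mul _ hF]
  refine lintegral_congr fun y => ?_
  rw [div_eq_inv_mul (p _), ENNReal.ofReal_mul (inv_nonneg.2 hc.le), mul_assoc]

lemma toReal_gsrTransition_eq_intervalIntegral {ν : Measure ℝ} {p : ℝ → ℝ}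
    (hp_nonneg : ∀ t, 0 ≤ p t) (hp : Measurable p)
    (hdens : ν = volume.withDensity fun t => ENNReal.ofReal (p t)) (hν : ν (Set.Iio 0) = 0)
    {A : ℝ} (hA : 0 ≤ A) {f : ℝ → ℝ≥0∞} (hf : Measurable f) (hf_fin : ∀ y ∈ Set.Ioc 0 A, f y ≠ ⊤)
    {x : ℝ} (hx : 0 < 1 + x) :
    (gsrTransition ν A f x).toReal =
      ∫ y in (0 : ℝ)..A, p (y / (1 + x)) / (1 + x) * (f y).toReal := by
  set c := 1 + x
  have hc : 0 < c := hx
  have hK : Measurable fun y => p (y / c) / c := (hp.comp (measurable_id.div_const c)).div_const c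
  have hIco : {u | c * u < A}.indicator (fun u => f (c * u)) =ᵐ[ν]
      fun u => (Set.Ico 0 A).indicator f (c * u) := by
    filter_upwards [measure_eq_zero_iff_ae_notMem.1 hν] with u hu
    have hcu : 0 ≤ c * u := mul_nonneg hc.le (not_lt.1 hu)
    by_cases hu' : c * u < A
    · rw [Set.indicator_of_mem (show u ∈ {u | c * u < A} from hu'),
        Set.indicator_of_mem (show c * u ∈ Set.Ico 0 A from ⟨hcu, hu'⟩)]
    · rw [Set.indicator_of_notMem (show u ∉ {u | c * u < A} from hu'),
        Set.indicator_of_notMem (show c * u ∉ Set.Ico 0 A from fun h => hu' h.2)]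
  have hK_nonneg : ∀ y, 0 ≤ p (y / c) / c := fun y => div_nonneg (hp_nonneg _) hc.le
  rw [gsrTransition, lintegral_congr_ae hIco, hdens,
    lintegral_comp_mul_withDensity hp hc (hf.indicator measurableSet_Ico),
    intervalIntegral.integral_of_le hA, integral_eq_lintegral_of_nonneg_ae
      (Filter.Eventually.of_forall fun y => mul_nonneg (hK_nonneg y) ENNReal.toReal_nonneg)
      (hK.mul hf.ennreal_toReal).aestronglyMeasurable]
  congr 1
  simp_rw [← Set.indicator_mul_right (Set.Ico 0 A) (fun y => ENNReal.ofReal (p (y / c) / c)) f]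
  rw [lintegral_indicator measurableSet_Ico, Measure.restrict_congr_set Ico_ae_eq_Ioc]
  refine setLIntegral_congr_fun measurableSet_Ioc fun y hy => ?_
  rw [ENNReal.ofReal_mul (hK_nonneg y), ENNReal.ofReal_toReal (hf_fin y hy)]

lemma ENNReal.toReal_eq_two_mul_sub_one_add {a b d : ℝ≥0∞} (h : a + 1 = 2 * b + d) (ha : a ≠ ⊤) :
    a.toReal = 2 * b.toReal - 1 + d.toReal := by
  have hsum : 2 * b + d ≠ ⊤ := h ▸ ENNReal.add_ne_top.2 ⟨ha, ENNReal.one_ne_top⟩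
  have h2b : 2 * b ≠ ⊤ := (ENNReal.add_ne_top.1 hsum).1
  have hreal := congrArg ENNReal.toReal h
  rw [ENNReal.toReal_add ha ENNReal.one_ne_top,
    ENNReal.toReal_add h2b (ENNReal.add_ne_top.1 hsum).2, ENNReal.toReal_mul] at hreal
  simp only [ENNReal.toReal_one, ENNReal.toReal_ofNat] at hreal
  linarith

section iid

variable {Ω : Type*}

lemma gsrPath_eq_of_rec (Λ : ℕ → Ω → ℝ) (x : ℝ) {R : ℕ → Ω → ℝ} (h0 : R 0 = fun _ => x)
    (hrec : ∀ n, R (n + 1) = fun ω => (1 + R n ω) * Λ (n + 1) ω) (m : ℕ) (ω : Ω) :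
    R m ω = gsrPath x (fun j => Λ (j + 1) ω) m := by
  induction m with
  | zero => rw [h0]; rfl
  | succ n ih => rw [hrec]; exact congrArg (fun r => (1 + r) * Λ (n + 1) ω) ih

variable {X : Ω → ℕ → ℝ} (A y : ℝ)

lemma setOf_natCast_lt_gsrStoppingTime (k : ℕ) :
    {ω | (k : ℕ∞) < gsrStoppingTime A y (X ω)} =
      (fun ω (i : Fin k) => X ω i) ⁻¹' survivalSet A k y := by
  ext ω
  rw [Set.mem_preimage, mem_survivalSet_iff, ← natCast_lt_gsrStoppingTime_iff]
  rfl

variable [MeasurableSpace Ω] (P : Measure Ω)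

lemma map_fun_succ_eq_pi {Λ : ℕ → Ω → ℝ} (hmeas : ∀ n, Measurable (Λ n))
    (hindep : iIndepFun Λ P) (hident : ∀ n, IdentDistrib (Λ n) (Λ 1) P P) (k : ℕ) :
    P.map (fun ω (i : Fin k) => Λ (i + 1) ω) = Measure.pi fun _ => P.map (Λ 1) := by
  have hinj : Function.Injective fun i : Fin k => (i : ℕ) + 1 := fun i j h =>
    Fin.ext (Nat.succ_injective h)
  rw [(hindep.precomp hinj).map_fun_eq_pi_map fun i => (hmeas _).aemeasurable]
  simp_rw [(hident _).map_eq]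

variable {ν : Measure ℝ} (hX : Measurable X)
  (hlaw : ∀ k : ℕ, P.map (fun ω (i : Fin k) => X ω i) = Measure.pi fun _ => ν)

include hX in
lemma measurableSet_natCast_lt_gsrStoppingTime (k : ℕ) :
    MeasurableSet {ω | (k : ℕ∞) < gsrStoppingTime A y (X ω)} := by
  rw [setOf_natCast_lt_gsrStoppingTime]
  exact (measurableSet_survivalSet A k y).preimage (by fun_prop)

include hX hlaw in
lemma measure_natCast_lt_gsrStoppingTime (k : ℕ) :
    P {ω | (k : ℕ∞) < gsrStoppingTime A y (X ω)} = survivalProb ν A k y := by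
  rw [setOf_natCast_lt_gsrStoppingTime, ← Measure.map_apply (by fun_prop)
    (measurableSet_survivalSet A k y), hlaw, survivalProb]

include hX hlaw in
lemma lintegral_gsrStoppingTime_eq_arl :
    ∫⁻ ω, (gsrStoppingTime A y (X ω) : ℝ≥0∞) ∂P = arl ν A y := by
  simp_rw [ENat.toENNReal_eq_tsum]
  rw [lintegral_tsum_ite_natCast_lt P _ (measurableSet_natCast_lt_gsrStoppingTime A y hX)]
  simp_rw [measure_natCast_lt_gsrStoppingTime A y P hX hlaw, one_mul, arl]

include hX hlaw in
lemma lintegral_gsrStoppingTime_sq_eq_arlSecondMoment :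
    ∫⁻ ω, (gsrStoppingTime A y (X ω) : ℝ≥0∞) ^ 2 ∂P = arlSecondMoment ν A y := by
  simp_rw [ENat.toENNReal_sq_eq_tsum]
  rw [lintegral_tsum_ite_natCast_lt P _ (measurableSet_natCast_lt_gsrStoppingTime A y hX)]
  simp_rw [measure_natCast_lt_gsrStoppingTime A y P hX hlaw, arlSecondMoment]

end iid

/-- The second moment `μ₂ x = E[(S_A^x)²]` of the GSR stopping time
is finite on `[0,A]` and satisfies `μ₂ x = 2·ℓ x - 1 + ∫_0^A K x y · μ₂ y dy`, where
`ℓ x = E[S_A^x]` and `K x y = p (y/(1+x)) / (1+x)`. -/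
theorem stmt11 {Ω : Type*} [MeasurableSpace Ω] (P : Measure Ω) [IsProbabilityMeasure P]
    (Λ : ℕ → Ω → ℝ) (hmeas : ∀ n, Measurable (Λ n))
    (hindep : iIndepFun Λ P)
    (hident : ∀ n, IdentDistrib (Λ n) (Λ 1) P P)
    (hnonneg : ∀ n ω, 0 ≤ Λ n ω)
    (p : ℝ → ℝ) (hp_nonneg : ∀ t, 0 ≤ p t) (hp_meas : Measurable p)
    (hdens : Measure.map (Λ 1) P = volume.withDensity (fun t => ENNReal.ofReal (p t)))
    (A : ℝ) (hA : 0 < A) (hpos : 0 < P {ω | A < Λ 1 ω})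
    (R : ℝ → ℕ → Ω → ℝ)
    (hR0 : ∀ x, R x 0 = fun _ => x)
    (hRrec : ∀ x n, R x (n + 1) = fun ω => (1 + R x n ω) * Λ (n + 1) ω)
    (S : ℝ → Ω → ℕ∞)
    (hS : ∀ x ω, S x ω = sInf {n : ℕ∞ | ∃ m : ℕ, n = m ∧ 1 ≤ m ∧ A ≤ R x m ω})
    (ℓ : ℝ → ℝ≥0∞)
    (hℓ : ∀ x, ℓ x = ∫⁻ ω, (S x ω : ℝ≥0∞) ∂P)
    (μ₂ : ℝ → ℝ≥0∞)
    (hμ₂ : ∀ x, μ₂ x = ∫⁻ ω, ((S x ω : ℝ≥0∞)) ^ 2 ∂P)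
    (K : ℝ → ℝ → ℝ)
    (hK : ∀ x y, K x y = p (y / (1 + x)) / (1 + x)) :
    ∀ x ∈ Set.Icc (0:ℝ) A, μ₂ x < ⊤ ∧
      (μ₂ x).toReal = 2 * (ℓ x).toReal - 1 + ∫ y in (0:ℝ)..A, K x y * (μ₂ y).toReal := by
  set ν := P.map (Λ 1)
  have : IsProbabilityMeasure ν := Measure.isProbabilityMeasure_map (hmeas 1).aemeasurable
  have hX : Measurable fun ω j => Λ (j + 1) ω := measurable_pi_lambda _ fun j => hmeas _
  have hlaw := map_fun_succ_eq_pi P hmeas hindep hident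
  have hS' : ∀ x ω, S x ω = gsrStoppingTime A x (fun j => Λ (j + 1) ω) := fun x ω => by
    simp only [hS, gsrPath_eq_of_rec Λ x (hR0 x) (hRrec x), gsrStoppingTime]
  obtain rfl : μ₂ = arlSecondMoment ν A := funext fun x => by
    simp_rw [hμ₂, hS']
    exact lintegral_gsrStoppingTime_sq_eq_arlSecondMoment A x P hX hlaw
  obtain rfl : ℓ = arl ν A := funext fun x => by
    simp_rw [hℓ, hS']
    exact lintegral_gsrStoppingTime_eq_arl A x P hX hlaw
  obtain rfl : K = fun x y => p (y / (1 + x)) / (1 + x) := funext₂ hK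
  have hν0 : ν (Set.Iio 0) = 0 := by
    rw [Measure.map_apply (hmeas 1) measurableSet_Iio]
    exact measure_mono_null (fun ω hω => (not_lt.2 (hnonneg 1 ω)) hω) measure_empty
  have hνA : ν (Set.Iio A) < 1 := by
    rw [← Set.compl_Ici, prob_compl_eq_one_sub measurableSet_Ici]
    refine ENNReal.sub_lt_self ENNReal.one_ne_top one_ne_zero (pos_iff_ne_zero.1 ?_)
    rw [Measure.map_apply (hmeas 1) measurableSet_Ici]
    exact hpos.trans_le (measure_mono fun ω (hω : A < Λ 1 ω) => hω.le)
  have hfin : ∀ y, 0 ≤ y → arlSecondMoment ν A y < ⊤ := fun y hy =>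
    arlSecondMoment_lt_top ν A hν0 hνA hy
  intro x hx
  refine ⟨hfin x hx.1, ?_⟩
  rw [ENNReal.toReal_eq_two_mul_sub_one_add (arlSecondMoment_add_one ν A x) (hfin x hx.1).ne,
    toReal_gsrTransition_eq_intervalIntegral hp_nonneg hp_meas hdens hν0 hA.le
      (measurable_arlSecondMoment ν A) (fun y hy => (hfin y hy.1.le).ne) (by linarith [hx.1])]
end

section
/- (Theorem 3.1) Let A > 0 and X = C([0,A], ℝ) with the supremum norm. Let K : X → X be a bounded linear positive operator (u ≥ 0 implies K u ≥ 0) with ‖K‖ < 1, and let ℓ ∈ X be the unique solution of ℓ = 𝟙 + K ℓ, where 𝟙 is the constant-one function. Let 0 = x_0 < x_1 < … < x_{N−1} = A be a partition with mesh h = max_i (x_i − x_{i−1}), and let π : X → X be the piecewise linear interpolation operator at the nodes x_0, …, x_{N−1}. Assume ℓ is twice continuously differentiable on [0,A], that I − K∘π is invertible with ‖(I − K∘π)⁻¹‖ ≤ ‖(I − K)⁻¹‖, and let ℓ̃ ∈ X satisfy ℓ̃ = 𝟙 + K(π ℓ̃). Then ‖ℓ − ℓ̃‖_∞ ≤ ‖ℓ‖_∞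 · ‖ℓ''‖_∞ · h²/8. -/
/-!
Subtracting the two fixed-point equations gives `(I - Kπ)(ℓ - ℓ̃) = K(ℓ - πℓ)`, so, as `‖K‖ ≤ 1`,
`‖ℓ - ℓ̃‖ ≤ ‖(I - Kπ)⁻¹‖ ‖ℓ - πℓ‖ ≤ ‖(I - K)⁻¹‖ ‖ℓ - πℓ‖`. The Neumann series `∑ Kⁿ` shows that
`(I - K)⁻¹` is a positive operator, and a positive operator `T` on `C(X, ℝ)` has norm `‖T 1‖`;
here `(I - K)⁻¹ 1 = ℓ`. Finally, if `|g''| ≤ M` then `g ± M s² / 2` are convex, which bounds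
the error of linear interpolation on `[a, b]` at `t` by `M (t - a)(b - t) / 2 ≤ M (b - a)² / 8`.
-/

open Set

lemma convexOn_half_mul_sq_add {S : Set ℝ} (hS : Convex ℝ S) {g g' g'' : ℝ → ℝ} {M : ℝ}
    (hg' : ∀ s ∈ S, HasDerivWithinAt g (g' s) S s)
    (hg'' : ∀ s ∈ S, HasDerivWithinAt g' (g'' s) S s) (hM : ∀ s ∈ S, -M ≤ g'' s) :
    ConvexOn ℝ S (fun s => M / 2 * s ^ 2 + g s) := by
  have hsq : ∀ s, HasDerivAt (fun s : ℝ => M / 2 * s ^ 2) (M * s) s := fun s =>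
    ((hasDerivAt_pow 2 s).const_mul (M / 2)).congr_deriv (by norm_num; ring)
  have hlin : ∀ s, HasDerivAt (fun s : ℝ => M * s) M s := fun s => by
    simpa using (hasDerivAt_id s).const_mul M
  refine convexOn_of_hasDerivWithinAt2_nonneg hS (f' := fun s => M * s + g' s)
    (f'' := fun s => M + g'' s)
    (fun s hs => (hsq s).continuousAt.continuousWithinAt.add (hg' s hs).continuousWithinAt)
    (fun s hs => ?_) (fun s hs => ?_) (fun s hs => ?_)
  · exact (hsq s).hasDerivWithinAt.add ((hg' s (interior_subset hs)).mono interior_subset)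
  · exact (hlin s).hasDerivWithinAt.add ((hg'' s (interior_subset hs)).mono interior_subset)
  · linarith [hM s (interior_subset hs)]

lemma sub_linearInterp_le {S : Set ℝ} (hS : Convex ℝ S) {g g' g'' : ℝ → ℝ} {M : ℝ}
    (hg' : ∀ s ∈ S, HasDerivWithinAt g (g' s) S s)
    (hg'' : ∀ s ∈ S, HasDerivWithinAt g' (g'' s) S s) (hM : ∀ s ∈ S, -M ≤ g'' s)
    {a b t : ℝ} (ha : a ∈ S) (hb : b ∈ S) (hab : a < b) (ht : t ∈ Icc a b) :
    g t - (g a * ((b - t) / (b - a)) + g b * ((t - a) / (b - a))) ≤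
      M / 2 * ((t - a) * (b - t)) := by
  have hba : 0 < b - a := sub_pos.2 hab
  have hconv := (convexOn_half_mul_sq_add hS hg' hg'' hM).2 ha hb
    (div_nonneg (sub_nonneg.2 ht.2) hba.le) (div_nonneg (sub_nonneg.2 ht.1) hba.le)
    (by field_simp; ring)
  have hcomb : (b - t) / (b - a) * a + (t - a) / (b - a) * b = t := by field_simp; ring
  simp only [smul_eq_mul, hcomb] at hconv
  have hquad : (b - t) / (b - a) * a ^ 2 + (t - a) / (b - a) * b ^ 2 - t ^ 2
      = (t - a) * (b - t) := by field_simp; ring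
  linear_combination hconv + M / 2 * hquad

lemma abs_sub_linearInterp_le {S : Set ℝ} (hS : Convex ℝ S) (hSu : UniqueDiffOn ℝ S)
    {g : ℝ → ℝ} (hg : ContDiffOn ℝ 2 g S) {M : ℝ}
    (hM : ∀ s ∈ S, |iteratedDerivWithin 2 g S s| ≤ M)
    {a b t : ℝ} (ha : a ∈ S) (hb : b ∈ S) (hab : a < b) (ht : t ∈ Icc a b) :
    |g t - (g a * ((b - t) / (b - a)) + g b * ((t - a) / (b - a)))| ≤ M * (b - a) ^ 2 / 8 := by
  have hg' : ∀ s ∈ S, HasDerivWithinAt g (derivWithin g S s) S s := fun s hs =>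
    (hg.differentiableOn (by norm_num) s hs).hasDerivWithinAt
  have hg'' : ∀ s ∈ S, HasDerivWithinAt (derivWithin g S) (iteratedDerivWithin 2 g S s) S s :=
    fun s hs => by
      rw [iteratedDerivWithin_eq_iterate]
      exact ((hg.derivWithin hSu (m := 1) (by norm_num)).differentiableOn (by norm_num) s
        hs).hasDerivWithinAt
  have hupper := sub_linearInterp_le hS hg' hg'' (fun s hs => (abs_le.1 (hM s hs)).1) ha hb hab ht
  have hlower := sub_linearInterp_le hS (fun s hs => (hg' s hs).neg) (fun s hs => (hg'' s hs).neg)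
    (fun s hs => neg_le_neg (abs_le.1 (hM s hs)).2) ha hb hab ht
  have hM0 : 0 ≤ M := (abs_nonneg _).trans (hM a ha)
  have hamgm : (t - a) * (b - t) ≤ (b - a) ^ 2 / 4 := by nlinarith [sq_nonneg (2 * t - a - b)]
  simp only [Pi.neg_apply] at hlower
  rw [abs_le]
  constructor <;> nlinarith

lemma exists_mem_Icc_of_le_of_le {α : Type*} [LinearOrder α] (x : ℕ → α) {t : α}
    (h0 : x 0 ≤ t) : ∀ n, t ≤ x (n + 1) → ∃ i ≤ n, t ∈ Icc (x i) (x (i + 1))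
  | 0, ht => ⟨0, le_rfl, h0, ht⟩
  | n + 1, ht => by
    by_cases hn : x (n + 1) ≤ t
    · exact ⟨n + 1, le_rfl, hn, ht⟩
    · obtain ⟨i, hi, hti⟩ := exists_mem_Icc_of_le_of_le x h0 n (le_of_not_ge hn)
      exact ⟨i, hi.trans n.le_succ, hti⟩

lemma norm_sub_piecewiseLinear_le {A : ℝ} (hA : 0 < A) {N : ℕ} (hN : 2 ≤ N) {x : ℕ → ℝ}
    (hx0 : x 0 = 0) (hxN : x (N - 1) = A) (hxmem : ∀ i, i ≤ N - 1 → x i ∈ Icc (0:ℝ) A)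
    (hxinc : ∀ i, i + 1 ≤ N - 1 → x i < x (i + 1))
    {h : ℝ} (hmesh : ∀ i, i + 1 ≤ N - 1 → x (i + 1) - x i ≤ h)
    {u v : C(Icc (0:ℝ) A, ℝ)}
    (hv : ∀ (i : ℕ), i + 1 ≤ N - 1 →
      ∀ (hi : x i ∈ Icc (0:ℝ) A) (hi1 : x (i + 1) ∈ Icc (0:ℝ) A)
        (t : Icc (0:ℝ) A), (t : ℝ) ∈ Icc (x i) (x (i + 1)) →
        v t = u ⟨x i, hi⟩ * ((x (i + 1) - (t : ℝ)) / (x (i + 1) - x i))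
          + u ⟨x (i + 1), hi1⟩ * (((t : ℝ) - x i) / (x (i + 1) - x i)))
    {g : ℝ → ℝ} (hgu : ∀ t : Icc (0:ℝ) A, g t = u t) (hg : ContDiffOn ℝ 2 g (Icc 0 A))
    {M : ℝ} (hM : ∀ t ∈ Icc (0:ℝ) A, |iteratedDerivWithin 2 g (Icc 0 A) t| ≤ M) :
    ‖u - v‖ ≤ M * h ^ 2 / 8 := by
  have hM0 : 0 ≤ M := (abs_nonneg _).trans (hM _ (hxmem 0 (Nat.zero_le _)))
  refine (ContinuousMap.norm_le _ (by positivity)).2 fun t => ?_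
  have ht0 : x 0 ≤ t := by rw [hx0]; exact t.2.1
  have htN : (t : ℝ) ≤ x (N - 2 + 1) := by
    rw [show N - 2 + 1 = N - 1 by omega, hxN]
    exact t.2.2
  obtain ⟨i, hi, hti⟩ := exists_mem_Icc_of_le_of_le x ht0 (N - 2) htN
  have hi1 : i + 1 ≤ N - 1 := by omega
  have hxi := hxmem i (by omega)
  have hxi1 := hxmem (i + 1) hi1
  have hlt := hxinc i hi1
  rw [ContinuousMap.sub_apply, hv i hi1 hxi hxi1 t hti, ← hgu, ← hgu, ← hgu, Real.norm_eq_abs]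
  refine (abs_sub_linearInterp_le (convex_Icc 0 A) (uniqueDiffOn_Icc hA) hg hM hxi hxi1 hlt
    hti).trans ?_
  gcongr
  exact hmesh i hi1

section PositiveOperator

variable {X : Type*} [TopologicalSpace X] [CompactSpace X]

lemma ContinuousLinearMap.opNorm_le_norm_apply_one_of_nonneg (T : C(X, ℝ) →L[ℝ] C(X, ℝ))
    (hT : ∀ u, 0 ≤ u → 0 ≤ T u) : ‖T‖ ≤ ‖T 1‖ := by
  refine T.opNorm_le_bound (norm_nonneg _) fun u => ?_
  refine (ContinuousMap.norm_le _ (by positivity)).2 fun s => ?_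
  have hT1 : ∀ s, T 1 s ≤ ‖T 1‖ := fun s =>
    (le_abs_self _).trans (by simpa using (T 1).norm_coe_le_norm s)
  have hbound : ∀ v : C(X, ℝ), (∀ s, v s ≤ ‖u‖) → T v s ≤ ‖T 1‖ * ‖u‖ := fun v hv => by
    have hpos := ContinuousMap.le_def.1 (hT (‖u‖ • 1 - v)
      (ContinuousMap.le_def.2 fun s => by simpa using hv s)) s
    simp only [map_sub, map_smul, ContinuousMap.sub_apply, ContinuousMap.smul_apply,
      smul_eq_mul, ContinuousMap.zero_apply] at hpos
    calc T v s ≤ ‖u‖ * T 1 s := by linarith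
      _ ≤ ‖u‖ * ‖T 1‖ := mul_le_mul_of_nonneg_left (hT1 s) (norm_nonneg u)
      _ = ‖T 1‖ * ‖u‖ := mul_comm _ _
  rw [Real.norm_eq_abs, abs_le]
  have hu : ∀ s, |u s| ≤ ‖u‖ := fun s => by simpa using u.norm_coe_le_norm s
  constructor
  · have := hbound (-u) fun s => by simpa using (neg_le_abs (u s)).trans (hu s)
    simp only [map_neg, ContinuousMap.neg_apply] at this
    linarith
  · exact hbound u fun s => (le_abs_self _).trans (hu s)

lemma ring_inverse_one_sub_apply_nonneg {K : C(X, ℝ) →L[ℝ] C(X, ℝ)}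
    (hK : ∀ u, 0 ≤ u → 0 ≤ K u) (hKnorm : ‖K‖ < 1) {u : C(X, ℝ)} (hu : 0 ≤ u) :
    0 ≤ Ring.inverse (1 - K) u := by
  have hpow : ∀ n : ℕ, 0 ≤ (K ^ n) u := fun n => by
    induction n with
    | zero => simpa using hu
    | succ n ih => rw [pow_succ']; exact hK _ ih
  refine ContinuousMap.le_def.2 fun s => ?_
  let E : (C(X, ℝ) →L[ℝ] C(X, ℝ)) →L[ℝ] ℝ :=
    (ContinuousMap.evalCLM ℝ s).comp (ContinuousLinearMap.apply ℝ C(X, ℝ) u)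
  exact ((hasSum_geom_series_inverse K hKnorm).mapL E).nonneg
    fun n => ContinuousMap.le_def.1 (hpow n) s

lemma norm_ring_inverse_one_sub_le {K : C(X, ℝ) →L[ℝ] C(X, ℝ)}
    (hK : ∀ u, 0 ≤ u → 0 ≤ K u) (hKnorm : ‖K‖ < 1) {ℓ : C(X, ℝ)} (hℓ : ℓ = 1 + K ℓ) :
    ‖Ring.inverse (1 - K)‖ ≤ ‖ℓ‖ := by
  have hunit := isUnit_one_sub_of_norm_lt_one (R := C(X, ℝ) →L[ℝ] C(X, ℝ)) hKnorm
  have hone : (1 - K) ℓ = 1 := by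
    rw [sub_apply, one_apply_eq_self, sub_eq_iff_eq_add]
    exact hℓ
  have hinv_one : Ring.inverse (1 - K) 1 = ℓ := by
    rw [← hone, ← mul_apply_eq_comp, Ring.inverse_mul_cancel _ hunit, one_apply_eq_self]
  rw [← hinv_one]
  exact ContinuousLinearMap.opNorm_le_norm_apply_one_of_nonneg _
    fun u hu => ring_inverse_one_sub_apply_nonneg hK hKnorm hu

end PositiveOperator

section Collocation

variable {𝕜 E : Type*} [NontriviallyNormedField 𝕜] [NormedAddCommGroup E] [NormedSpace 𝕜 E]

lemma sub_eq_of_mul_one_sub_mul_eq_one {K P B : E →L[𝕜] E} {f ℓ ℓt : E}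
    (hℓ : ℓ = f + K ℓ) (hℓt : ℓt = f + K (P ℓt)) (hB : B * (1 - K * P) = 1) :
    ℓ - ℓt = B (K (ℓ - P ℓ)) := by
  have hres : (1 - K * P) (ℓ - ℓt) = K (ℓ - P ℓ) := by
    simp only [sub_apply, one_apply_eq_self, mul_apply_eq_comp, map_sub]
    linear_combination (norm := abel) hℓ - hℓt
  rw [← hres, ← mul_apply_eq_comp, hB, one_apply_eq_self]

lemma norm_sub_le_of_mul_one_sub_mul_eq_one {K P B : E →L[𝕜] E} {f ℓ ℓt : E}
    (hℓ : ℓ = f + K ℓ) (hℓt : ℓt = f + K (P ℓt)) (hB : B * (1 - K * P) = 1) (hK : ‖K‖ ≤ 1) :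
    ‖ℓ - ℓt‖ ≤ ‖B‖ * ‖ℓ - P ℓ‖ := by
  rw [sub_eq_of_mul_one_sub_mul_eq_one hℓ hℓt hB]
  refine (B.le_opNorm _).trans (mul_le_mul_of_nonneg_left ?_ (norm_nonneg B))
  exact (K.le_opNorm _).trans (mul_le_of_le_one_left (norm_nonneg _) hK)

end Collocation

/-- **Theorem 3.1.** Error bound for the iterated collocation solution
of the ARL Fredholm equation with piecewise linear interpolation: if `K` is a positive
bounded linear operator on `C([0,A],ℝ)` with `‖K‖ < 1`, `ℓ = 𝟙 + K ℓ`, `proj` is the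
piecewise linear interpolation operator at the partition nodes `x 0 = 0 < … < x (N-1) = A`
of mesh at most `h`, `ℓ` is twice continuously differentiable with `|ℓ''| ≤ M`,
`I - K∘proj` is invertible with `‖(I - K∘proj)⁻¹‖ ≤ ‖(I - K)⁻¹‖`, and `ℓt = 𝟙 + K (proj ℓt)`,
then `‖ℓ - ℓt‖ ≤ ‖ℓ‖ * M * h² / 8`. -/
theorem stmt14 (A : ℝ) (hA : 0 < A)
    (K : C(Icc (0:ℝ) A, ℝ) →L[ℝ] C(Icc (0:ℝ) A, ℝ))
    (hKpos : ∀ u : C(Icc (0:ℝ) A, ℝ), (∀ t, 0 ≤ u t) → ∀ t, 0 ≤ (K u) t)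
    (hKnorm : ‖K‖ < 1)
    (ℓ : C(Icc (0:ℝ) A, ℝ)) (hℓ : ℓ = 1 + K ℓ)
    (N : ℕ) (hN : 2 ≤ N)
    (x : ℕ → ℝ) (hx0 : x 0 = 0) (hxN : x (N - 1) = A)
    (hxmem : ∀ i, i ≤ N - 1 → x i ∈ Icc (0:ℝ) A)
    (hxinc : ∀ i, i + 1 ≤ N - 1 → x i < x (i + 1))
    (h : ℝ) (hmesh : ∀ i, i + 1 ≤ N - 1 → x (i + 1) - x i ≤ h)
    (proj : C(Icc (0:ℝ) A, ℝ) →L[ℝ] C(Icc (0:ℝ) A, ℝ))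
    (hproj : ∀ (u : C(Icc (0:ℝ) A, ℝ)) (i : ℕ), i + 1 ≤ N - 1 →
      ∀ (hi : x i ∈ Icc (0:ℝ) A) (hi1 : x (i + 1) ∈ Icc (0:ℝ) A)
        (t : Icc (0:ℝ) A), (t : ℝ) ∈ Icc (x i) (x (i + 1)) →
        (proj u) t = u ⟨x i, hi⟩ * ((x (i + 1) - (t : ℝ)) / (x (i + 1) - x i))
          + u ⟨x (i + 1), hi1⟩ * (((t : ℝ) - x i) / (x (i + 1) - x i)))
    (g : ℝ → ℝ) (hgℓ : ∀ t : Icc (0:ℝ) A, g t = ℓ t)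
    (hg : ContDiffOn ℝ 2 g (Icc 0 A))
    (M : ℝ) (hM : ∀ t ∈ Icc (0:ℝ) A, |iteratedDerivWithin 2 g (Icc 0 A) t| ≤ M)
    (hBex : ∃ B, B * (1 - K * proj) = 1 ∧ (1 - K * proj) * B = 1)
    (hinv : ∀ (B C : C(Icc (0:ℝ) A, ℝ) →L[ℝ] C(Icc (0:ℝ) A, ℝ)),
      B * (1 - K * proj) = 1 → (1 - K * proj) * B = 1 →
      C * (1 - K) = 1 → (1 - K) * C = 1 → ‖B‖ ≤ ‖C‖)
    (ℓt : C(Icc (0:ℝ) A, ℝ)) (hℓt : ℓt = 1 + K (proj ℓt)) :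
    ‖ℓ - ℓt‖ ≤ ‖ℓ‖ * M * h ^ 2 / 8 := by
  have hKnonneg : ∀ u, 0 ≤ u → 0 ≤ K u := fun u hu =>
    ContinuousMap.le_def.2 (hKpos u (ContinuousMap.le_def.1 hu))
  have hunit :=
    isUnit_one_sub_of_norm_lt_one (R := C(Icc (0:ℝ) A, ℝ) →L[ℝ] C(Icc (0:ℝ) A, ℝ)) hKnorm
  obtain ⟨B, hB, hB'⟩ := hBex
  have hBnorm : ‖B‖ ≤ ‖ℓ‖ :=
    (hinv B _ hB hB' (Ring.inverse_mul_cancel _ hunit) (Ring.mul_inverse_cancel _ hunit)).trans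
      (norm_ring_inverse_one_sub_le hKnonneg hKnorm hℓ)
  have hinterp : ‖ℓ - proj ℓ‖ ≤ M * h ^ 2 / 8 :=
    norm_sub_piecewiseLinear_le hA hN hx0 hxN hxmem hxinc hmesh (hproj ℓ) hgℓ hg hM
  calc ‖ℓ - ℓt‖ ≤ ‖B‖ * ‖ℓ - proj ℓ‖ :=
        norm_sub_le_of_mul_one_sub_mul_eq_one hℓ hℓt hB hKnorm.le
    _ ≤ ‖ℓ‖ * (M * h ^ 2 / 8) := mul_le_mul hBnorm hinterp (norm_nonneg _) (norm_nonneg _)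
    _ = ‖ℓ‖ * M * h ^ 2 / 8 := by ring
end
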